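/- Suppose in addition that ε < (1−γ)/(2nΓγ). Then there exists a constant F > 0 such that for every agent i ∈ {1,…,n} and every K ≥ 0, Σ_{k=0}^K g_k ‖z̄^{k+1} − x_i^{k+1}‖ ≤ F Σ_{k=0}^K α_k². -/

import Mathlib

/-!
Stack the iterates as `w k = (x k, y k)`; then `w (k+1) = M w k + e k` with `e k = (gv k, 0)`, so
`w (k+1) = ∑_{s ≤ k} M^(k-s) e s`. The columns of `M` sum to one, so `zbar (k+1)` is the average
of `∑_{s ≤ k} e s`, and `zbar (k+1) - x (k+1) i` and `y (k+1) i` are rows of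
`∑_{s ≤ k} (L - M^(k-s)) e s`, where `L` is the limit of `M^k`. They are therefore bounded by
`Γ F (k+1)` and `Γ γ F k`, where `F` is the geometric filter `F (k+1) = γ F k + g k`; the extra
factor `γ` for `y` appears because the `s = k` term `e k` vanishes in the lower half.
Since `X` contains the convex combination `∑_j A i j • x k j`, the projection error is at most the
displacement `ε y - α d`, so `g (k+1) ≤ 2nB α (k+1) + εnΓγ F k`. The filter has `ℓ²` gain
`1/(1-γ)`, so for `εnΓγ ≤ (1-γ)/2` this closes to `∑ g² ≤ 4 ∑ (2nB α)²`, and Cauchy–Schwarz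
bounds `∑ g k F (k+1)` by `∑ g² / (1-γ)`.
-/

open Finset
open scoped RealInnerProductSpace

def geomFilter (γ : ℝ) (g : ℕ → ℝ) : ℕ → ℝ
  | 0 => 0
  | k + 1 => γ * geomFilter γ g k + g k

section GeomFilter

variable {γ : ℝ} {g : ℕ → ℝ}

@[simp] lemma geomFilter_zero : geomFilter γ g 0 = 0 := rfl

lemma geomFilter_succ (k : ℕ) : geomFilter γ g (k + 1) = γ * geomFilter γ g k + g k := rfl

lemma geomFilter_succ_eq_sum (k : ℕ) :
    geomFilter γ g (k + 1) = ∑ s ∈ range (k + 1), γ ^ (k - s) * g s := by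
  induction k with
  | zero => simp [geomFilter_succ]
  | succ k ih =>
    rw [geomFilter_succ, ih, sum_range_succ _ (k + 1), Nat.sub_self, pow_zero, one_mul, mul_sum]
    congr 1
    refine sum_congr rfl fun s hs => ?_
    rw [Nat.sub_add_comm (Nat.lt_succ_iff.mp (mem_range.mp hs)), pow_succ']
    ring

lemma sum_sq_geomFilter_le_sum_sq_geomFilter_succ (N : ℕ) :
    ∑ k ∈ range N, geomFilter γ g k ^ 2 ≤ ∑ k ∈ range N, geomFilter γ g (k + 1) ^ 2 :=
  calc ∑ k ∈ range N, geomFilter γ g k ^ 2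
      ≤ ∑ k ∈ range (N + 1), geomFilter γ g k ^ 2 :=
        sum_le_sum_of_subset_of_nonneg (range_subset_range.mpr N.le_succ) fun _ _ _ => sq_nonneg _
    _ = ∑ k ∈ range N, geomFilter γ g (k + 1) ^ 2 := by simp [sum_range_succ']

lemma sq_mul_add_le_of_lt_one (hγ0 : 0 ≤ γ) (hγ1 : γ < 1) (a b : ℝ) :
    (γ * a + b) ^ 2 ≤ γ * a ^ 2 + b ^ 2 / (1 - γ) := by
  have h1 : 0 < 1 - γ := by linarith
  have key : γ * a ^ 2 + b ^ 2 / (1 - γ) - (γ * a + b) ^ 2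
      = γ / (1 - γ) * ((1 - γ) * a - b) ^ 2 := by
    field_simp
    ring
  have : 0 ≤ γ / (1 - γ) * ((1 - γ) * a - b) ^ 2 := by positivity
  linarith

lemma sum_sq_geomFilter_succ_le (hγ0 : 0 ≤ γ) (hγ1 : γ < 1) (N : ℕ) :
    ∑ k ∈ range N, geomFilter γ g (k + 1) ^ 2 ≤ (∑ k ∈ range N, g k ^ 2) / (1 - γ) ^ 2 := by
  set S := ∑ k ∈ range N, geomFilter γ g (k + 1) ^ 2
  set G := ∑ k ∈ range N, g k ^ 2
  have h1 : 0 < 1 - γ := by linarith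
  have hstep : S ≤ γ * ∑ k ∈ range N, geomFilter γ g k ^ 2 + G / (1 - γ) := by
    rw [mul_sum, sum_div, ← sum_add_distrib]
    exact sum_le_sum fun k _ => sq_mul_add_le_of_lt_one hγ0 hγ1 _ _
  have hshift := sum_sq_geomFilter_le_sum_sq_geomFilter_succ (γ := γ) (g := g) N
  have : (1 - γ) * S ≤ G / (1 - γ) := by nlinarith
  rw [le_div_iff₀ (by positivity)]
  calc S * (1 - γ) ^ 2 = (1 - γ) * ((1 - γ) * S) := by ring
    _ ≤ (1 - γ) * (G / (1 - γ)) := by gcongr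
    _ = G := by field_simp

lemma sum_mul_geomFilter_succ_le (hγ0 : 0 ≤ γ) (hγ1 : γ < 1) (N : ℕ) :
    ∑ k ∈ range N, g k * geomFilter γ g (k + 1) ≤ (∑ k ∈ range N, g k ^ 2) / (1 - γ) := by
  set G := ∑ k ∈ range N, g k ^ 2
  have h1 : 0 < 1 - γ := by linarith
  have hG : 0 ≤ G := sum_nonneg fun k _ => sq_nonneg _
  have hCS : (∑ k ∈ range N, g k * geomFilter γ g (k + 1)) ^ 2 ≤ (G / (1 - γ)) ^ 2 :=
    calc (∑ k ∈ range N, g k * geomFilter γ g (k + 1)) ^ 2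
        ≤ G * ∑ k ∈ range N, geomFilter γ g (k + 1) ^ 2 := sum_mul_sq_le_sq_mul_sq _ _ _
      _ ≤ G * (G / (1 - γ) ^ 2) := by gcongr; exact sum_sq_geomFilter_succ_le hγ0 hγ1 N
      _ = (G / (1 - γ)) ^ 2 := by rw [div_pow]; ring
  exact (abs_le_of_sq_le_sq hCS (by positivity)).trans' (le_abs_self _)

lemma sum_sq_le_of_le_add_geomFilter {u : ℕ → ℝ} {c : ℝ} (hγ0 : 0 ≤ γ) (hγ1 : γ < 1)
    (hc0 : 0 ≤ c) (hc : c ≤ (1 - γ) / 2) (hg : ∀ k, 0 ≤ g k) (h0 : g 0 ≤ u 0)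
    (hsucc : ∀ k, g (k + 1) ≤ u (k + 1) + c * geomFilter γ g k) (N : ℕ) :
    ∑ k ∈ range N, g k ^ 2 ≤ 4 * ∑ k ∈ range N, u k ^ 2 := by
  cases N with
  | zero => simp
  | succ N =>
    set G := ∑ k ∈ range (N + 1), g k ^ 2
    have h1 : 0 < 1 - γ := by linarith
    have hsq : ∀ k, g (k + 1) ^ 2 ≤ 2 * u (k + 1) ^ 2 + 2 * c ^ 2 * geomFilter γ g k ^ 2 := by
      intro k
      nlinarith [hsucc k, hg (k + 1), sq_nonneg (u (k + 1) - c * geomFilter γ g k)]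
    have hF : ∑ k ∈ range N, geomFilter γ g k ^ 2 ≤ G / (1 - γ) ^ 2 := by
      refine (sum_sq_geomFilter_le_sum_sq_geomFilter_succ N).trans
        ((sum_sq_geomFilter_succ_le hγ0 hγ1 N).trans ?_)
      gcongr
      exact sum_le_sum_of_subset_of_nonneg (range_subset_range.mpr N.le_succ)
        fun _ _ _ => sq_nonneg _
    have hsmall : 2 * c ^ 2 * (G / (1 - γ) ^ 2) ≤ G / 2 := by
      have hG : 0 ≤ G := sum_nonneg fun k _ => sq_nonneg _
      rw [mul_div_assoc', div_le_div_iff₀ (by positivity) two_pos]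
      have : (2 * c) ^ 2 ≤ (1 - γ) ^ 2 := pow_le_pow_left₀ (by positivity) (by linarith) 2
      nlinarith
    have hsum : G ≤ 2 * ∑ k ∈ range (N + 1), u k ^ 2 + 2 * c ^ 2 * (G / (1 - γ) ^ 2) := by
      calc G = ∑ k ∈ range N, g (k + 1) ^ 2 + g 0 ^ 2 := sum_range_succ' _ _
        _ ≤ ∑ k ∈ range N, (2 * u (k + 1) ^ 2 + 2 * c ^ 2 * geomFilter γ g k ^ 2)
            + 2 * u 0 ^ 2 := by
          gcongr with k
          · exact hsq k
          · nlinarith [hg 0]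
        _ ≤ 2 * ∑ k ∈ range (N + 1), u k ^ 2 + 2 * c ^ 2 * (G / (1 - γ) ^ 2) := by
          rw [sum_add_distrib, ← mul_sum, ← mul_sum, sum_range_succ' (fun k => u k ^ 2)]
          nlinarith [hF]
    linarith

lemma sum_mul_geomFilter_succ_le_of_le_add {u : ℕ → ℝ} {c : ℝ} (hγ0 : 0 ≤ γ) (hγ1 : γ < 1)
    (hc0 : 0 ≤ c) (hc : c ≤ (1 - γ) / 2) (hg : ∀ k, 0 ≤ g k) (h0 : g 0 ≤ u 0)
    (hsucc : ∀ k, g (k + 1) ≤ u (k + 1) + c * geomFilter γ g k) (N : ℕ) :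
    ∑ k ∈ range N, g k * geomFilter γ g (k + 1) ≤ 4 / (1 - γ) * ∑ k ∈ range N, u k ^ 2 :=
  calc ∑ k ∈ range N, g k * geomFilter γ g (k + 1)
      ≤ (∑ k ∈ range N, g k ^ 2) / (1 - γ) := sum_mul_geomFilter_succ_le hγ0 hγ1 N
    _ ≤ (4 * ∑ k ∈ range N, u k ^ 2) / (1 - γ) :=
        div_le_div_of_nonneg_right (sum_sq_le_of_le_add_geomFilter hγ0 hγ1 hc0 hc hg h0 hsucc N)
          (by linarith)
    _ = 4 / (1 - γ) * ∑ k ∈ range N, u k ^ 2 := by ring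

end GeomFilter

section LinearRecursion

variable {ι R V : Type*} [Fintype ι] [Semiring R] [AddCommMonoid V] [Module R V]

lemma sum_smul_sum_smul (M N : Matrix ι ι R) (v : ι → V) (j : ι) :
    ∑ l, M j l • ∑ m, N l m • v m = ∑ m, (M * N) j m • v m := by
  simp only [smul_sum, smul_smul, Matrix.mul_apply, sum_smul]
  exact sum_comm

lemma sum_one_apply_smul [DecidableEq ι] (v : ι → V) (j : ι) :
    ∑ l, (1 : Matrix ι ι R) j l • v l = v j := by
  simp [Matrix.one_apply, ite_smul]

variable {M : Matrix ι ι R} {w e : ℕ → ι → V}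

lemma eq_sum_range_pow_smul_of_step [DecidableEq ι] (h0 : w 0 = 0)
    (hstep : ∀ k j, w (k + 1) j = ∑ l, M j l • w k l + e k j) (k : ℕ) (j : ι) :
    w (k + 1) j = ∑ s ∈ range (k + 1), ∑ l, (M ^ (k - s)) j l • e s l := by
  induction k generalizing j with
  | zero => simp [hstep, h0, sum_one_apply_smul]
  | succ k ih =>
    rw [hstep, sum_range_succ _ (k + 1), Nat.sub_self, pow_zero, sum_one_apply_smul]
    congr 1
    calc ∑ l, M j l • w (k + 1) l
        = ∑ l, ∑ s ∈ range (k + 1), M j l • ∑ m, (M ^ (k - s)) l m • e s m :=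
          sum_congr rfl fun l _ => by rw [ih, smul_sum]
      _ = ∑ s ∈ range (k + 1), ∑ l, M j l • ∑ m, (M ^ (k - s)) l m • e s m := sum_comm
      _ = ∑ s ∈ range (k + 1), ∑ m, (M ^ (k + 1 - s)) j m • e s m :=
          sum_congr rfl fun s hs => by
            rw [sum_smul_sum_smul, ← pow_succ', Nat.sub_add_comm (mem_range_succ_iff.mp hs)]

lemma sum_eq_sum_range_sum_of_step (hcol : ∀ l, ∑ j, M j l = 1) (h0 : w 0 = 0)
    (hstep : ∀ k j, w (k + 1) j = ∑ l, M j l • w k l + e k j) (k : ℕ) :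
    ∑ j, w k j = ∑ s ∈ range k, ∑ j, e s j := by
  induction k with
  | zero => simp [h0]
  | succ k ih =>
    simp_rw [hstep, sum_add_distrib, sum_range_succ, ← ih]
    rw [sum_comm]
    simp [← sum_smul, hcol]

end LinearRecursion

lemma norm_sum_smul_le_of_sum_abs_le {ι V : Type*} [Fintype ι] [SeminormedAddCommGroup V]
    [NormedSpace ℝ V] {c : ι → ℝ} {C : ℝ} (hc : ∑ l, |c l| ≤ C) (v : ι → V) :
    ‖∑ l, c l • v l‖ ≤ C * ∑ l, ‖v l‖ :=
  calc ‖∑ l, c l • v l‖ ≤ ∑ l, |c l| * ‖v l‖ := by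
        simpa only [norm_smul, Real.norm_eq_abs] using norm_sum_le univ fun l => c l • v l
    _ ≤ ∑ l, C * ‖v l‖ := by
        gcongr with l
        exact (single_le_sum (fun l _ => abs_nonneg (c l)) (mem_univ l)).trans hc
    _ = C * ∑ l, ‖v l‖ := (mul_sum _ _ _).symm

lemma norm_proj_sub_le {E : Type*} [SeminormedAddCommGroup E] {X : Set E} {P : E → E}
    (hP : ∀ v w, w ∈ X → ‖P v - v‖ ≤ ‖w - v‖) {u : E} (hu : u ∈ X) (a b : E) :
    ‖P (u + a - b) - u - a‖ ≤ ‖a‖ + 2 * ‖b‖ :=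
  calc ‖P (u + a - b) - u - a‖ = ‖(P (u + a - b) - (u + a - b)) - b‖ := by abel_nf
    _ ≤ ‖u - (u + a - b)‖ + ‖b‖ := norm_sub_le_of_le (hP _ _ hu) le_rfl
    _ = ‖b - a‖ + ‖b‖ := by abel_nf
    _ ≤ ‖a‖ + 2 * ‖b‖ := by linarith [norm_sub_le b a]

lemma sum_norm_proj_step_sub_le {ι E : Type*} [Fintype ι] [NormedAddCommGroup E]
    [NormedSpace ℝ E] {X : Set E} {P : E → E} (hP : ∀ v w, w ∈ X → ‖P v - v‖ ≤ ‖w - v‖)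
    (hX : Convex ℝ X) {A : Matrix ι ι ℝ} (hA : ∀ i j, 0 ≤ A i j) (hA1 : ∀ i, ∑ j, A i j = 1)
    {x : ι → E} (hx : ∀ j, x j ∈ X) {ε α B : ℝ} (hε : 0 ≤ ε) (hα : 0 ≤ α) (y : ι → E)
    {d : ι → E} (hd : ∀ i, ‖d i‖ ≤ B) :
    ∑ i, ‖P (∑ j, A i j • x j + ε • y i - α • d i) - ∑ j, A i j • x j - ε • y i‖
      ≤ 2 * Fintype.card ι * B * α + ε * ∑ i, ‖y i‖ :=
  calc _ ≤ ∑ i, (ε * ‖y i‖ + 2 * α * B) := sum_le_sum fun i _ => by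
        have hu : ∑ j, A i j • x j ∈ X := hX.sum_mem (fun j _ => hA i j) (hA1 i) fun j _ => hx j
        have hαd : ‖α • d i‖ ≤ α * B := by
          rw [norm_smul, Real.norm_of_nonneg hα]; exact mul_le_mul_of_nonneg_left (hd i) hα
        have := norm_proj_sub_le hP hu (ε • y i) (α • d i)
        rw [norm_smul, Real.norm_of_nonneg hε] at this
        linarith
    _ = _ := by simp only [sum_add_distrib, sum_const, card_univ, nsmul_eq_mul, mul_sum]; ring

section DDPS

variable {n : ℕ}

def ddpsMatrix (A Bh : Matrix (Fin n) (Fin n) ℝ) (ε : ℝ) :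
    Matrix (Fin n ⊕ Fin n) (Fin n ⊕ Fin n) ℝ :=
  Matrix.fromBlocks A (ε • 1) (1 - A) (Bh - ε • 1)

noncomputable def consensusMatrix (n : ℕ) : Matrix (Fin n ⊕ Fin n) (Fin n ⊕ Fin n) ℝ :=
  Matrix.fromBlocks (Matrix.of fun _ _ => (n : ℝ)⁻¹) (Matrix.of fun _ _ => (n : ℝ)⁻¹) 0 0

lemma ddpsMatrix_sum_col_eq_one {A Bh : Matrix (Fin n) (Fin n) ℝ} (hBcol : ∀ j, ∑ i, Bh i j = 1)
    (ε : ℝ) (l : Fin n ⊕ Fin n) : ∑ j, ddpsMatrix A Bh ε j l = 1 := by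
  rcases l with t | t <;>
    simp [ddpsMatrix, Fintype.sum_sum_type, Matrix.one_apply, sum_sub_distrib, hBcol]

lemma ddpsMatrix_step {V : Type*} [AddCommGroup V] [Module ℝ V]
    {A Bh : Matrix (Fin n) (Fin n) ℝ} {ε : ℝ} {x y x' y' gv : Fin n → V}
    (hgv : ∀ i, gv i = x' i - ∑ j, A i j • x j - ε • y i)
    (hy : ∀ i, y' i = x i - ∑ j, A i j • x j + ∑ j, Bh i j • y j - ε • y i)
    (j : Fin n ⊕ Fin n) :
    Sum.elim x' y' j = ∑ l, ddpsMatrix A Bh ε j l • Sum.elim x y l + Sum.elim gv 0 j := by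
  rcases j with i | i
  · simp [ddpsMatrix, Fintype.sum_sum_type, Matrix.one_apply, ite_smul, hgv]
  · simp [ddpsMatrix, Fintype.sum_sum_type, Matrix.one_apply, ite_smul, sub_smul, hy]
    abel

variable {V : Type*} [NormedAddCommGroup V] [NormedSpace ℝ V]
  {M : Matrix (Fin n ⊕ Fin n) (Fin n ⊕ Fin n) ℝ} {x y gv : ℕ → Fin n → V} {Γ γ : ℝ}

lemma norm_average_sub_le (hcol : ∀ l, ∑ j, M j l = 1)
    (hM : ∀ k j, ∑ l, |(M ^ k - consensusMatrix n) j l| ≤ Γ * γ ^ k)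
    (h0 : Sum.elim (x 0) (y 0) = 0)
    (hstep : ∀ k j, Sum.elim (x (k + 1)) (y (k + 1)) j
      = ∑ l, M j l • Sum.elim (x k) (y k) l + Sum.elim (gv k) 0 j) (k : ℕ) (i : Fin n) :
    ‖(n : ℝ)⁻¹ • (∑ i, x (k + 1) i + ∑ i, y (k + 1) i) - x (k + 1) i‖
      ≤ Γ * geomFilter γ (fun s => ∑ i, ‖gv s i‖) (k + 1) := by
  set e : ℕ → Fin n ⊕ Fin n → V := fun s => Sum.elim (gv s) 0
  have hmass := sum_eq_sum_range_sum_of_step (w := fun k => Sum.elim (x k) (y k)) (e := e) hcol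
    h0 hstep (k + 1)
  have hx := eq_sum_range_pow_smul_of_step (w := fun k => Sum.elim (x k) (y k)) (e := e) h0 hstep
    k (Sum.inl i)
  have havg : ∀ s, (n : ℝ)⁻¹ • ∑ j, e s j = ∑ l, consensusMatrix n (Sum.inl i) l • e s l := by
    intro s
    simp [e, consensusMatrix, Fintype.sum_sum_type, smul_sum]
  have hdiff : (n : ℝ)⁻¹ • (∑ i, x (k + 1) i + ∑ i, y (k + 1) i) - x (k + 1) i
      = ∑ s ∈ range (k + 1), ∑ l, (consensusMatrix n - M ^ (k - s)) (Sum.inl i) l • e s l := by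
    have hW : ∑ i, x (k + 1) i + ∑ i, y (k + 1) i
        = ∑ j, Sum.elim (x (k + 1)) (y (k + 1)) j := by simp [Fintype.sum_sum_type]
    rw [hW, hmass, ← Sum.elim_inl (x (k + 1)) (y (k + 1)) i, hx, smul_sum]
    simp only [havg, Matrix.sub_apply, sub_smul, sum_sub_distrib]
  rw [hdiff, geomFilter_succ_eq_sum, mul_sum]
  refine (norm_sum_le _ _).trans (sum_le_sum fun s _ => ?_)
  calc ‖∑ l, (consensusMatrix n - M ^ (k - s)) (Sum.inl i) l • e s l‖
      ≤ Γ * γ ^ (k - s) * ∑ l, ‖e s l‖ :=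
        norm_sum_smul_le_of_sum_abs_le (by
          simpa only [← neg_sub (M ^ (k - s)), Matrix.neg_apply, abs_neg] using hM _ _) _
    _ = Γ * (γ ^ (k - s) * ∑ i, ‖gv s i‖) := by simp [e, Fintype.sum_sum_type]; ring

lemma norm_y_succ_le (hM : ∀ k j, ∑ l, |(M ^ k - consensusMatrix n) j l| ≤ Γ * γ ^ k)
    (h0 : Sum.elim (x 0) (y 0) = 0)
    (hstep : ∀ k j, Sum.elim (x (k + 1)) (y (k + 1)) j
      = ∑ l, M j l • Sum.elim (x k) (y k) l + Sum.elim (gv k) 0 j) (k : ℕ) (i : Fin n) :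
    ‖y (k + 1) i‖ ≤ Γ * (γ * geomFilter γ (fun s => ∑ i, ‖gv s i‖) k) := by
  set e : ℕ → Fin n ⊕ Fin n → V := fun s => Sum.elim (gv s) 0
  set g : ℕ → ℝ := fun s => ∑ i, ‖gv s i‖
  have hy := eq_sum_range_pow_smul_of_step (w := fun k => Sum.elim (x k) (y k)) (e := e) h0 hstep
    k (Sum.inr i)
  -- The `s = k` term is `e k (Sum.inr i) = 0`.
  rw [sum_range_succ, Nat.sub_self, pow_zero, sum_one_apply_smul] at hy
  have hy' : y (k + 1) i
      = ∑ s ∈ range k, ∑ l, (M ^ (k - s) - consensusMatrix n) (Sum.inr i) l • e s l := by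
    simpa [e, consensusMatrix] using hy
  have hF : γ * geomFilter γ g k = ∑ s ∈ range k, γ ^ (k - s) * g s := by
    have := geomFilter_succ_eq_sum (γ := γ) (g := g) k
    rw [geomFilter_succ, sum_range_succ, Nat.sub_self, pow_zero, one_mul] at this
    linarith
  rw [hy', hF, mul_sum]
  refine (norm_sum_le _ _).trans (sum_le_sum fun s _ => ?_)
  calc ‖∑ l, (M ^ (k - s) - consensusMatrix n) (Sum.inr i) l • e s l‖
      ≤ Γ * γ ^ (k - s) * ∑ l, ‖e s l‖ := norm_sum_smul_le_of_sum_abs_le (hM _ _) _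
    _ = Γ * (γ ^ (k - s) * g s) := by simp [e, g, Fintype.sum_sum_type]; ring

end DDPS

theorem ddps_perturbation_consensus_sum_general
    {n p : ℕ} (hn : 1 ≤ n)
    (f : Fin n → EuclideanSpace ℝ (Fin p) → ℝ)
    (B : ℝ) (hB : 0 < B)
    (hsubB : ∀ (i : Fin n) (u s : EuclideanSpace ℝ (Fin p)),
      (∀ v, f i u + ⟪s, v - u⟫ ≤ f i v) → ‖s‖ ≤ B)
    (X : Set (EuclideanSpace ℝ (Fin p)))
    (hXcv : Convex ℝ X)
    (hX0 : (0 : EuclideanSpace ℝ (Fin p)) ∈ X)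
    (P : EuclideanSpace ℝ (Fin p) → EuclideanSpace ℝ (Fin p))
    (hPmem : ∀ v, P v ∈ X)
    (hPproj : ∀ v w, w ∈ X → ‖P v - v‖ ≤ ‖w - v‖)
    (A Bh : Matrix (Fin n) (Fin n) ℝ)
    (hAnn : ∀ i j, 0 ≤ A i j) (hArow : ∀ i, ∑ j, A i j = 1)
    (hBcol : ∀ j, ∑ i, Bh i j = 1)
    (ε : ℝ) (hε : 0 < ε)
    (α : ℕ → ℝ) (hαnn : ∀ k, 0 ≤ α k)
    (x y d : ℕ → Fin n → EuclideanSpace ℝ (Fin p))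
    (hx0 : ∀ i, x 0 i = 0) (hy0 : ∀ i, y 0 i = 0)
    (hd : ∀ k i v, f i (x k i) + ⟪d k i, v - x k i⟫ ≤ f i v)
    (hxupd : ∀ k i, x (k + 1) i = P (∑ j, A i j • x k j + ε • y k i - α k • d k i))
    (hyupd : ∀ k i, y (k + 1) i =
      x k i - ∑ j, A i j • x k j + (∑ j, Bh i j • y k j) - ε • y k i)
    (gv : ℕ → Fin n → EuclideanSpace ℝ (Fin p))
    (hgv : ∀ k i, gv k i = x (k + 1) i - ∑ j, A i j • x k j - ε • y k i)
    (g : ℕ → ℝ) (hg : ∀ k, g k = ∑ i, ‖gv k i‖)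
    (zbar : ℕ → EuclideanSpace ℝ (Fin p))
    (hzbar : ∀ k, zbar k = (n : ℝ)⁻¹ • (∑ i, x k i + ∑ i, y k i))
    (Γ γ : ℝ) (hΓ : 0 < Γ) (hγ0 : 0 < γ) (hγ1 : γ < 1)
    (hM : ∀ (k : ℕ) (i : Fin n ⊕ Fin n),
      ∑ j, |((Matrix.fromBlocks A (ε • (1 : Matrix (Fin n) (Fin n) ℝ))
          ((1 : Matrix (Fin n) (Fin n) ℝ) - A) (Bh - ε • (1 : Matrix (Fin n) (Fin n) ℝ))) ^ k
        - Matrix.fromBlocks (Matrix.of fun _ _ => (n : ℝ)⁻¹)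
            (Matrix.of fun _ _ => (n : ℝ)⁻¹) 0 0 :
          Matrix (Fin n ⊕ Fin n) (Fin n ⊕ Fin n) ℝ) i j| ≤ Γ * γ ^ k)
    (hεsmall : ε < (1 - γ) / (2 * n * Γ * γ))
    :
    ∃ F > 0, ∀ (i : Fin n) (K : ℕ),
      ∑ k ∈ Finset.range (K + 1), g k * ‖zbar (k + 1) - x (k + 1) i‖ ≤
        F * ∑ k ∈ Finset.range (K + 1), (α k) ^ 2 := by
  have hgf : (fun s => ∑ i, ‖gv s i‖) = g := funext fun s => (hg s).symm
  have hxX : ∀ k i, x k i ∈ X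
    | 0, i => hx0 i ▸ hX0
    | k + 1, i => hxupd k i ▸ hPmem _
  have h0 : Sum.elim (x 0) (y 0) = 0 := by funext j; cases j <;> simp [hx0, hy0]
  have hstep k := ddpsMatrix_step (A := A) (Bh := Bh) (ε := ε) (hgv k) (hyupd k)
  have hg_le k : g k ≤ 2 * n * B * α k + ε * ∑ i, ‖y k i‖ := by
    simpa [hg, hgv, hxupd] using sum_norm_proj_step_sub_le hPproj hXcv hAnn hArow (hxX k) hε.le
      (hαnn k) (y k) fun i => hsubB _ _ _ (hd k i)
  have hy_le k : ∑ i, ‖y (k + 1) i‖ ≤ n * (Γ * (γ * geomFilter γ g k)) := by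
    simpa [hgf] using sum_le_sum (s := univ) fun i _ => norm_y_succ_le hM h0 hstep k i
  have hn' : (0 : ℝ) < n := by exact_mod_cast hn
  have hsmall : ε * n * Γ * γ ≤ (1 - γ) / 2 := by
    have := (lt_div_iff₀ (by positivity)).mp hεsmall
    linarith
  have hg0 k : 0 ≤ g k := hg k ▸ sum_nonneg fun i _ => norm_nonneg _
  have hgF := sum_mul_geomFilter_succ_le_of_le_add (u := fun k => 2 * n * B * α k) hγ0.le hγ1
    (by positivity) hsmall hg0
    (by simpa [hy0] using hg_le 0)
    (fun k => (hg_le (k + 1)).trans (by linarith [mul_le_mul_of_nonneg_left (hy_le k) hε.le]))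
  have h1γ : 0 < 1 - γ := by linarith
  refine ⟨4 / (1 - γ) * Γ * (2 * n * B) ^ 2, by positivity, fun i K => ?_⟩
  calc ∑ k ∈ range (K + 1), g k * ‖zbar (k + 1) - x (k + 1) i‖
      ≤ ∑ k ∈ range (K + 1), g k * (Γ * geomFilter γ g (k + 1)) := by
        gcongr with k
        · exact hg0 k
        rw [hzbar, ← hgf]
        exact norm_average_sub_le (ddpsMatrix_sum_col_eq_one hBcol ε) hM h0 hstep k i
    _ = Γ * ∑ k ∈ range (K + 1), g k * geomFilter γ g (k + 1) := by
        rw [mul_sum]; simp only [mul_left_comm]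
    _ ≤ Γ * (4 / (1 - γ) * ∑ k ∈ range (K + 1), (2 * n * B * α k) ^ 2) := by
        gcongr; exact hgF _
    _ = _ := by simp only [mul_pow, ← mul_sum]; ring

theorem ddps_perturbation_consensus_sum
    {n p : ℕ} (hn : 1 ≤ n) (hp : 1 ≤ p)
    (f : Fin n → EuclideanSpace ℝ (Fin p) → ℝ)
    (hconv : ∀ i, ConvexOn ℝ Set.univ (f i))
    (B : ℝ) (hB : 0 < B)
    (hsubB : ∀ (i : Fin n) (u s : EuclideanSpace ℝ (Fin p)),
      (∀ v, f i u + ⟪s, v - u⟫ ≤ f i v) → ‖s‖ ≤ B)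
    (X : Set (EuclideanSpace ℝ (Fin p)))
    (hXne : X.Nonempty) (hXcl : IsClosed X) (hXcv : Convex ℝ X)
    (hX0 : (0 : EuclideanSpace ℝ (Fin p)) ∈ X)
    (P : EuclideanSpace ℝ (Fin p) → EuclideanSpace ℝ (Fin p))
    (hPmem : ∀ v, P v ∈ X)
    (hPproj : ∀ v w, w ∈ X → ‖P v - v‖ ≤ ‖w - v‖)
    (A Bh : Matrix (Fin n) (Fin n) ℝ)
    (hAnn : ∀ i j, 0 ≤ A i j) (hArow : ∀ i, ∑ j, A i j = 1)
    (hBnn : ∀ i j, 0 ≤ Bh i j) (hBcol : ∀ j, ∑ i, Bh i j = 1)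
    (ε : ℝ) (hε : 0 < ε)
    (α : ℕ → ℝ) (hαnn : ∀ k, 0 ≤ α k) (hαdec : ∀ k, α (k + 1) ≤ α k)
    (x y d : ℕ → Fin n → EuclideanSpace ℝ (Fin p))
    (hx0 : ∀ i, x 0 i = 0) (hy0 : ∀ i, y 0 i = 0)
    (hd : ∀ k i v, f i (x k i) + ⟪d k i, v - x k i⟫ ≤ f i v)
    (hxupd : ∀ k i, x (k + 1) i = P (∑ j, A i j • x k j + ε • y k i - α k • d k i))
    (hyupd : ∀ k i, y (k + 1) i =
      x k i - ∑ j, A i j • x k j + (∑ j, Bh i j • y k j) - ε • y k i)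
    (gv : ℕ → Fin n → EuclideanSpace ℝ (Fin p))
    (hgv : ∀ k i, gv k i = x (k + 1) i - ∑ j, A i j • x k j - ε • y k i)
    (g : ℕ → ℝ) (hg : ∀ k, g k = ∑ i, ‖gv k i‖)
    (zbar : ℕ → EuclideanSpace ℝ (Fin p))
    (hzbar : ∀ k, zbar k = (n : ℝ)⁻¹ • (∑ i, x k i + ∑ i, y k i))
    (Γ γ : ℝ) (hΓ : 0 < Γ) (hγ0 : 0 < γ) (hγ1 : γ < 1)
    (hM : ∀ (k : ℕ) (i : Fin n ⊕ Fin n),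
      ∑ j, |((Matrix.fromBlocks A (ε • (1 : Matrix (Fin n) (Fin n) ℝ))
          ((1 : Matrix (Fin n) (Fin n) ℝ) - A) (Bh - ε • (1 : Matrix (Fin n) (Fin n) ℝ))) ^ k
        - Matrix.fromBlocks (Matrix.of fun _ _ => (n : ℝ)⁻¹)
            (Matrix.of fun _ _ => (n : ℝ)⁻¹) 0 0 :
          Matrix (Fin n ⊕ Fin n) (Fin n ⊕ Fin n) ℝ) i j| ≤ Γ * γ ^ k)
    (hεsmall : ε < (1 - γ) / (2 * n * Γ * γ))
    :
    ∃ F > 0, ∀ (i : Fin n) (K : ℕ),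
      ∑ k ∈ Finset.range (K + 1), g k * ‖zbar (k + 1) - x (k + 1) i‖ ≤
        F * ∑ k ∈ Finset.range (K + 1), (α k) ^ 2 :=
  ddps_perturbation_consensus_sum_general hn f B hB hsubB X hXcv hX0 P hPmem hPproj A Bh hAnn hArow
    hBcol ε hε α hαnn x y d hx0 hy0 hd hxupd hyupd gv hgv g hg zbar hzbar Γ γ hΓ hγ0 hγ1 hM hεsmall
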